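/- arXiv:math/0203189 — 6 statements merged into one kernel-verified Lean document; each statement's English description precedes it below -/
import Mathlib

section
/- With 𝔡 = 𝔡_A(𝔤,ℝ) the double extension of a metric Lie algebra (𝔤,⟨·,·⟩) by a skew-symmetric derivation A, the bilinear form on 𝔡 = ℝα ⊕ 𝔤 ⊕ ℝH given by ⟨(aα + X + hH), (a'α + X' + h'H)⟩_𝔡 = ⟨X,X'⟩ + a h' + a' h is ad-invariant for the double extension bracket. -/
/-- The natural metric on the double extension 𝔡_A(𝔤,ℝ) = ℝα ⊕ 𝔤 ⊕ ℝH,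
given by ⟨aα+X+hH, a'α+X'+h'H⟩ = ⟨X,X'⟩ + a h' + a' h, is ad-invariant
for the double extension bracket. -/
theorem double_extension_metric_invariant
    (V : Type*) [LieRing V] [LieAlgebra ℝ V]
    (B : LinearMap.BilinForm ℝ V)
    (hsymm : ∀ X Y : V, B X Y = B Y X)
    (hinv : ∀ X Y Z : V, B ⁅X, Y⁆ Z = - B Y ⁅X, Z⁆)
    (A : V →ₗ[ℝ] V)
    (hder : ∀ X Y : V, A ⁅X, Y⁆ = ⁅A X, Y⁆ + ⁅X, A Y⁆)
    (hskew : ∀ X Y : V, B (A X) Y = - B X (A Y))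
    (br : (ℝ × V × ℝ) → (ℝ × V × ℝ) → (ℝ × V × ℝ))
    (hbr : ∀ u v : ℝ × V × ℝ, br u v =
      (B (A u.2.1) v.2.1,
       ⁅u.2.1, v.2.1⁆ + u.2.2 • A v.2.1 - v.2.2 • A u.2.1,
       0))
    (f : (ℝ × V × ℝ) → (ℝ × V × ℝ) → ℝ)
    (hf : ∀ u v : ℝ × V × ℝ,
      f u v = B u.2.1 v.2.1 + u.1 * v.2.2 + v.1 * u.2.2) :
    ∀ z w v : ℝ × V × ℝ, f (br z w) v = - f w (br z v) := by
  intro z w v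
  simp only [hbr, hf, map_add, map_sub, map_smul, LinearMap.add_apply,
    LinearMap.sub_apply, LinearMap.smul_apply, smul_eq_mul]
  rw [hinv, hskew z.2.1 w.2.1, hskew w.2.1 v.2.1, hsymm w.2.1 (A z.2.1), hskew z.2.1 w.2.1]
  ring
end

section
/- Let 𝔟 ⊆ 𝔰𝔬(n) be an abelian Lie subalgebra of the skew-symmetric real n×n matrices, and let X ∈ 𝔰𝔬(n) satisfy [X, 𝔟] ⊆ 𝔟. Then [X, 𝔟] = 0, i.e. X commutes with every element of 𝔟. -/
open Matrix

lemma aux_sq_sum_zero {n : ℕ} (Y : Matrix (Fin n) (Fin n) ℝ)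
    (h : Matrix.trace (Yᵀ * Y) = 0) : Y = 0 := by
  have hsum : ∑ j, ∑ i, Y i j ^ 2 = 0 := by
    simpa [Matrix.trace, Matrix.diag, Matrix.mul_apply, sq] using h
  ext i j
  have := Finset.sum_eq_zero_iff_of_nonneg (fun j _ => Finset.sum_nonneg
    (fun i _ => sq_nonneg (Y i j))) |>.mp hsum j (Finset.mem_univ j)
  have := Finset.sum_eq_zero_iff_of_nonneg (fun i _ => sq_nonneg (Y i j)) |>.mp
    this i (Finset.mem_univ i)
  simpa using pow_eq_zero_iff (n := 2) (by norm_num) |>.mp this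

/-- If 𝔟 ⊆ 𝔰𝔬(n) is an abelian subalgebra of the skew-symmetric real
n×n matrices and X ∈ 𝔰𝔬(n) satisfies [X, 𝔟] ⊆ 𝔟, then [X, 𝔟] = 0. -/
theorem abelian_subalgebra_normalizer_commutes
    (n : ℕ) (b : Submodule ℝ (Matrix (Fin n) (Fin n) ℝ))
    (hb_skew : ∀ M ∈ b, Mᵀ = -M)
    (hb_ab : ∀ M ∈ b, ∀ N ∈ b, M * N = N * M)
    (X : Matrix (Fin n) (Fin n) ℝ) (hX : Xᵀ = -X)
    (hXb : ∀ M ∈ b, X * M - M * X ∈ b) :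
    ∀ M ∈ b, X * M = M * X := by
  intro M hM
  set Y := X * M - M * X with hY
  have hYb : Y ∈ b := hXb M hM
  have hMY : M * Y = Y * M := hb_ab M hM Y hYb
  have htr : Matrix.trace (Y * Y) = 0 := by
    have h1 : Matrix.trace (X * M * Y) = Matrix.trace (M * X * Y) := by
      rw [mul_assoc, hMY, ← mul_assoc, Matrix.trace_mul_cycle]
    calc Matrix.trace (Y * Y) = Matrix.trace (X * M * Y) - Matrix.trace (M * X * Y) := by
          rw [hY, sub_mul, Matrix.trace_sub]
      _ = 0 := by rw [h1, sub_self]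
  have hYskew : Yᵀ = -Y := hb_skew Y hYb
  have : Matrix.trace (Yᵀ * Y) = 0 := by
    rw [hYskew, neg_mul, Matrix.trace_neg, htr, neg_zero]
  have hY0 : Y = 0 := aux_sq_sum_zero Y this
  exact sub_eq_zero.mp hY0
end

section
/- Let 𝔤 be a real Lie algebra with ad-invariant nondegenerate symmetric bilinear form ⟨·,·⟩_𝔤 and A = ad(X₀) an inner derivation (X₀ ∈ 𝔤). Then the double extension 𝔡_A(𝔤,ℝ) is isomorphic as a metric Lie algebra to the orthogonal product of 𝔤 and the 2-dimensional metric Lie algebra ℝα ⊕ ℝH with trivial bracket and form ⟨α,H⟩ = 1, ⟨H,H⟩ = ⟨X₀,X₀⟩_𝔤, ⟨α,α⟩ = 0, i.e. there is a Lie algebra isomorphism Φ : 𝔡_A(𝔤,ℝ) → 𝔤 × ℝ² that is an isometry for the described metrics. -/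
/-- If A = ad(X₀) is an inner derivation, the double extension 𝔡_A(𝔤,ℝ)
is isomorphic, as a metric Lie algebra, to the orthogonal product of 𝔤
with the 2-dimensional abelian metric Lie algebra ℝα' ⊕ ℝH' with
⟨α',H'⟩ = 1, ⟨H',H'⟩ = ⟨X₀,X₀⟩, ⟨α',α'⟩ = 0. -/
theorem double_extension_inner_derivation_decomposes
    (V : Type*) [LieRing V] [LieAlgebra ℝ V]
    (B : LinearMap.BilinForm ℝ V)
    (hsymm : ∀ X Y : V, B X Y = B Y X)
    (hnd : ∀ X : V, (∀ Y : V, B X Y = 0) → X = 0)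
    (hinv : ∀ X Y Z : V, B ⁅X, Y⁆ Z = - B Y ⁅X, Z⁆)
    (X₀ : V)
    (brD : (ℝ × V × ℝ) → (ℝ × V × ℝ) → (ℝ × V × ℝ))
    (hbrD : ∀ u v : ℝ × V × ℝ, brD u v =
      (B ⁅X₀, u.2.1⁆ v.2.1,
       ⁅u.2.1, v.2.1⁆ + u.2.2 • ⁅X₀, v.2.1⁆ - v.2.2 • ⁅X₀, u.2.1⁆,
       0))
    (fD : (ℝ × V × ℝ) → (ℝ × V × ℝ) → ℝ)
    (hfD : ∀ u v : ℝ × V × ℝ,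
      fD u v = B u.2.1 v.2.1 + u.1 * v.2.2 + v.1 * u.2.2)
    (brT : (V × ℝ × ℝ) → (V × ℝ × ℝ) → (V × ℝ × ℝ))
    (hbrT : ∀ u v : V × ℝ × ℝ, brT u v = (⁅u.1, v.1⁆, 0, 0))
    (fT : (V × ℝ × ℝ) → (V × ℝ × ℝ) → ℝ)
    (hfT : ∀ u v : V × ℝ × ℝ, fT u v =
      B u.1 v.1 + u.2.1 * v.2.2 + v.2.1 * u.2.2 + (B X₀ X₀) * u.2.2 * v.2.2) :
    ∃ Φ : (ℝ × V × ℝ) ≃ₗ[ℝ] (V × ℝ × ℝ),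
      (∀ u v, Φ (brD u v) = brT (Φ u) (Φ v)) ∧
      (∀ u v, fT (Φ u) (Φ v) = fD u v) := by
  refine ⟨{ toFun := fun u => (u.2.1 + u.2.2 • X₀, u.1 - B X₀ u.2.1 - u.2.2 * B X₀ X₀, u.2.2),
            invFun := fun w => (w.2.1 + B X₀ w.1, w.1 - w.2.2 • X₀, w.2.2),
            map_add' := by intro u v; simp [Prod.ext_iff, add_smul]; exact ⟨by abel, by ring⟩
            map_smul' := by intro c u; simp [Prod.ext_iff, smul_smul, mul_sub]; ring
            left_inv := by intro u; simp [Prod.ext_iff, map_smul]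
            right_inv := by intro w; simp [Prod.ext_iff, map_smul]; ring }, ?_, ?_⟩
  · intro u v
    obtain ⟨a, X, h⟩ := u; obtain ⟨a', X', h'⟩ := v
    have h1 : B X₀ ⁅X, X'⁆ = B ⁅X₀, X⁆ X' := by
      rw [hsymm X₀ ⁅X, X'⁆, hinv X X' X₀, ← lie_skew X X₀, map_neg, neg_neg, hsymm]
    have h2 : ∀ Y : V, B X₀ ⁅X₀, Y⁆ = 0 := by
      intro Y
      rw [hsymm, hinv]
      simp
    simp only [hbrD, hbrT]
    simp [Prod.ext_iff, map_add, map_sub, map_smul, h1, h2, lie_add, add_lie, lie_smul, smul_lie,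
      lie_skew X₀ X, lie_skew X₀ X']
    rw [← lie_skew X X₀]
    module
  · intro u v
    obtain ⟨a, X, h⟩ := u; obtain ⟨a', X', h'⟩ := v
    simp only [hfT, hfD]
    simp [map_add, map_smul, hsymm X X₀]
    ring
end

section
/- Let 𝔤 be an n-dimensional abelian Lie algebra with nondegenerate symmetric bilinear form of signature (p,q), and A ∈ 𝔰𝔬(𝔤) skew-symmetric with A² = 0. Then the curvature R(X,Y)Z = -¼[[X,Y],Z] of the double extension 𝔡_A vanishes identically, i.e. the associated metric Lie group A(p,q) is flat. -/
/-- If A² = 0 then the double extension 𝔡_A of an abelian metric Lie algebra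
of signature (p,q) is flat: the algebraic curvature R(U,V)W = -¼[[U,V],W]
vanishes, i.e. all double brackets vanish. -/
theorem double_extension_flat_of_A_sq_zero
    (V : Type*) [AddCommGroup V] [Module ℝ V]
    (B : LinearMap.BilinForm ℝ V)
    (hsymm : ∀ X Y : V, B X Y = B Y X)
    (hnd : ∀ X : V, (∀ Y : V, B X Y = 0) → X = 0)
    (A : V →ₗ[ℝ] V)
    (hskew : ∀ X Y : V, B (A X) Y = - B X (A Y))
    (hA2 : A ∘ₗ A = 0)
    (br : (ℝ × V × ℝ) → (ℝ × V × ℝ) → (ℝ × V × ℝ))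
    (hbr : ∀ u v : ℝ × V × ℝ, br u v =
      (B (A u.2.1) v.2.1, u.2.2 • A v.2.1 - v.2.2 • A u.2.1, 0)) :
    ∀ u v w : ℝ × V × ℝ, br (br u v) w = 0 := by
  intro u v w
  have hA2' : ∀ x : V, A (A x) = 0 := fun x =>
    congrFun (congrArg (fun f => f.toFun) hA2) x
  rw [hbr, hbr]
  simp [map_smul, map_sub, hA2', Prod.ext_iff]
end

section
/- Conversely, for 𝔤 abelian with nondegenerate form and A skew-symmetric, if [[U,V],W] = 0 for all U,V,W in the double extension 𝔡_A, then A² = 0. Combined with the previous statement: the double extension A(p,q) is flat if and only if A² = 0. -/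
/-- Conversely, if all double brackets in the double extension 𝔡_A vanish
(the associated group is flat), then A² = 0. -/
theorem A_sq_zero_of_double_extension_flat
    (V : Type*) [AddCommGroup V] [Module ℝ V]
    (B : LinearMap.BilinForm ℝ V)
    (hsymm : ∀ X Y : V, B X Y = B Y X)
    (hnd : ∀ X : V, (∀ Y : V, B X Y = 0) → X = 0)
    (A : V →ₗ[ℝ] V)
    (hskew : ∀ X Y : V, B (A X) Y = - B X (A Y))
    (br : (ℝ × V × ℝ) → (ℝ × V × ℝ) → (ℝ × V × ℝ))
    (hbr : ∀ u v : ℝ × V × ℝ, br u v =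
      (B (A u.2.1) v.2.1, u.2.2 • A v.2.1 - v.2.2 • A u.2.1, 0))
    (hflat : ∀ u v w : ℝ × V × ℝ, br (br u v) w = 0) :
    ∀ X : V, A (A X) = 0 := by
  intro X
  have h := hflat (0, 0, 1) (0, X, 0) (0, 0, 1)
  rw [hbr, hbr] at h
  simp at h
  exact h
end

section
/- Let 𝔤₀ be a Euclidean abelian Lie algebra of even dimension n and {U₀,...,U_{m-1}} ⊆ 𝔰𝔬(𝔤₀) a linearly independent commuting family with U₀ bijective. Then the center of the iterated double extension 𝔤_m⁰ = 𝔡(𝔤₀, A₀⁰,...,A_{m-1}⁰) (with all Z_k = 0, i.e. the generalized oscillator algebra osc(U₀,...,U_{m-1})) equals span{α₁,...,α_m}: an element X + Σλ_iH_i (X ∈ 𝔤₀) is central iff X ∈ ∩_j ker U_{j-1} and Σλ_i U_{i-1} = 0, which forces X = 0 and all λ_i = 0. -/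
/-- The center of the generalized oscillator algebra osc(U₀,...,U_{m-1})
(the iterated double extension of a Euclidean abelian Lie algebra 𝔤₀ of
even dimension by a linearly independent commuting family of skew-symmetric
maps with U₀ bijective) equals span{α₁,...,α_m}: an element
(a, X, λ) ∈ (ℝ^m)α ⊕ 𝔤₀ ⊕ (ℝ^m)H is central iff X = 0 and λ = 0. -/
theorem generalized_oscillator_center
    (V : Type*) [AddCommGroup V] [Module ℝ V] [FiniteDimensional ℝ V]
    (hEven : Even (Module.finrank ℝ V))
    (B : LinearMap.BilinForm ℝ V)
    (hsymm : ∀ X Y : V, B X Y = B Y X)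
    (hpos : ∀ X : V, X ≠ 0 → 0 < B X X)
    (m : ℕ) (hm : 0 < m)
    (U : Fin m → (V →ₗ[ℝ] V))
    (hskew : ∀ (k : Fin m) (X Y : V), B (U k X) Y = - B X (U k Y))
    (hcomm : ∀ k l : Fin m, (U k) ∘ₗ (U l) = (U l) ∘ₗ (U k))
    (hli : LinearIndependent ℝ U)
    (hbij : Function.Bijective (U ⟨0, hm⟩))
    (br : ((Fin m → ℝ) × V × (Fin m → ℝ)) → ((Fin m → ℝ) × V × (Fin m → ℝ)) →
          ((Fin m → ℝ) × V × (Fin m → ℝ)))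
    (hbr : ∀ u v, br u v =
      (fun j => B (U j u.2.1) v.2.1,
       (∑ i, u.2.2 i • U i v.2.1) - ∑ i, v.2.2 i • U i u.2.1,
       0)) :
    {z : (Fin m → ℝ) × V × (Fin m → ℝ) | ∀ w, br z w = 0} =
      {z | z.2.1 = 0 ∧ z.2.2 = 0} := by
  ext z
  obtain ⟨a, X, lam⟩ := z
  simp only [Set.mem_setOf_eq]
  constructor
  · intro h
    have key : ∀ Y : V, (∀ j, B (U j X) Y = 0) ∧ (∑ i, lam i • U i Y) = 0 := by
      intro Y
      have h0 := h (0, Y, 0)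
      rw [hbr] at h0
      rw [Prod.ext_iff, Prod.ext_iff] at h0
      obtain ⟨h1, h2, -⟩ := h0
      refine ⟨fun j => congrFun h1 j, ?_⟩
      simpa using h2
    have hUX : U ⟨0, hm⟩ X = 0 := by
      by_contra hne
      exact absurd ((key (U ⟨0, hm⟩ X)).1 ⟨0, hm⟩) (ne_of_gt (hpos _ hne))
    have hX : X = 0 := by
      apply hbij.injective
      rw [hUX, map_zero]
    refine ⟨hX, ?_⟩
    have hsum : (∑ i, lam i • U i) = 0 := by
      apply LinearMap.ext
      intro Y
      have := (key Y).2
      simpa [LinearMap.sum_apply] using this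
    funext i
    exact Fintype.linearIndependent_iff.mp hli lam hsum i
  · rintro ⟨hX, hlam⟩ w
    rw [hbr, hX, hlam]
    simp [Prod.ext_iff]
    funext j
    simp
end
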